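/- arXiv:0806.1957 — 4 statements merged into one kernel-verified Lean document; each statement's English description precedes it below -/
import Mathlib

section
/- If A is a Gδσ subset of Cantor space 2^ℕ (i.e., A is a countable union of Gδ sets), then either A is countable or A contains a subset homeomorphic to 2^ℕ. -/
/-!
A Gδσ set is Borel. An uncountable Borel set `s` in a Polish space becomes closed in a finer
Polish topology, where the Cantor–Bendixson argument embeds Cantor space continuously into `s`;
the embedding stays continuous for the original, coarser topology. A continuous injection from
the compact space `2^ℕ` into a Hausdorff space is a homeomorphism onto its range.
-/

open Set Topology

theorem MeasurableSet.exists_nat_bool_injection_of_not_countable {α : Type*}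
    [TopologicalSpace α] [PolishSpace α] [MeasurableSpace α] [BorelSpace α] {s : Set α}
    (hs : MeasurableSet s) (hunc : ¬s.Countable) :
    ∃ f : (ℕ → Bool) → α, range f ⊆ s ∧ Continuous f ∧ Function.Injective f := by
  obtain ⟨t', ht'_le, ht'_polish, hs_closed, -⟩ := hs.isClopenable
  obtain ⟨f, hf_range, hf_cont, hf_inj⟩ :=
    @IsClosed.exists_nat_bool_injection_of_not_countable α t' ht'_polish s hs_closed hunc
  exact ⟨f, hf_range, continuous_le_rng ht'_le hf_cont, hf_inj⟩

theorem MeasurableSet.exists_subset_homeomorph_nat_bool_of_not_countable {α : Type*}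
    [TopologicalSpace α] [PolishSpace α] [MeasurableSpace α] [BorelSpace α] {s : Set α}
    (hs : MeasurableSet s) (hunc : ¬s.Countable) :
    ∃ P ⊆ s, Nonempty (P ≃ₜ (ℕ → Bool)) := by
  obtain ⟨f, hf_range, hf_cont, hf_inj⟩ := hs.exists_nat_bool_injection_of_not_countable hunc
  exact ⟨range f, hf_range, ⟨((hf_cont.isClosedEmbedding hf_inj).isEmbedding.toHomeomorph).symm⟩⟩

/-- If `A ⊆ 2^ℕ` is a Gδσ set (a countable union of Gδ sets), then either `A`
is countable or `A` contains a subset homeomorphic to Cantor space `2^ℕ`. -/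
theorem gdeltasigma_countable_or_perfect_subset (A : Set (ℕ → Bool))
    (hA : ∃ H : ℕ → Set (ℕ → Bool), (∀ n, IsGδ (H n)) ∧ A = ⋃ n, H n) :
    A.Countable ∨ ∃ P : Set (ℕ → Bool), P ⊆ A ∧ Nonempty (↥P ≃ₜ (ℕ → Bool)) := by
  obtain ⟨H, hH, rfl⟩ := hA
  have : PolishSpace (ℕ → Bool) := {}
  have hA_borel : MeasurableSet (⋃ n, H n) := .iUnion fun n => (hH n).measurableSet
  rw [or_iff_not_imp_left]
  exact hA_borel.exists_subset_homeomorph_nat_bool_of_not_countable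
end

section
/- If H and K are disjoint Gδ subsets of Cantor space 2^ℕ, then there exists a set S ⊆ 2^ℕ which is both Fσ and Gδ such that H ⊆ S and K ∩ S = ∅ (Hausdorff separation of disjoint Gδ sets by a set in the difference hierarchy of closed sets). -/
/-!
Write `Hᶜ = ⋃ₙ Fₙ` and `Kᶜ = ⋃ₙ Gₙ` with `Fₙ, Gₙ` closed; these cover the space since `H ∩ K = ∅`.
Reduce the two Fσ sets: `A = ⋃ₙ Fₙ \ ⋃_{m<n} Gₘ` collects the points met by some `F` no later
than by any `G`, and its complement is `⋃ₙ Gₙ \ ⋃_{m≤n} Fₘ`. Both are countable unions of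
(closed ∩ open) sets, hence have Gδ complements because closed sets are Gδ. So `S = Aᶜ` is Gδ and
Fσ; it contains `H` as `A ⊆ Hᶜ`, and it misses `K` as every point of `K` lies in some `Fₙ` and in
no `Gₘ`.
-/

open Set

section

variable {X : Type*}

lemma compl_iUnion_diff_biUnion_lt {F G : ℕ → Set X} (hcover : (⋃ n, F n) ∪ ⋃ n, G n = univ) :
    (⋃ n, F n \ ⋃ m < n, G m)ᶜ = ⋃ n, G n \ ⋃ m ≤ n, F m := by
  classical
  ext x
  simp only [mem_compl_iff, mem_iUnion, mem_sdiff, not_exists, not_and, not_forall, not_not,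
    exists_prop]
  constructor
  · -- `x` lies in `Gₙ` for the first stage `n` at which it meets `Fₙ ∪ Gₙ`.
    intro hx
    have hex : ∃ n, x ∈ F n ∨ x ∈ G n := by
      simpa [exists_or] using hcover.ge (mem_univ x)
    have hmin := fun m => Nat.find_min (m := m) hex
    refine ⟨Nat.find hex, ?_, fun m hm hxF => ?_⟩
    · refine (Nat.find_spec hex).resolve_left fun hxF => ?_
      obtain ⟨m, hm, hxG⟩ := hx _ hxF
      exact hmin m hm (Or.inr hxG)
    · rcases hm.lt_or_eq with hm | rfl
      · exact hmin m hm (Or.inl hxF)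
      · obtain ⟨k, hk, hxG⟩ := hx _ hxF
        exact hmin k hk (Or.inr hxG)
  · rintro ⟨n, hxG, hnF⟩ k hxF
    by_contra! hG
    rcases lt_or_ge n k with hnk | hkn
    · exact hG n hnk hxG
    · exact hnF k hkn hxF

variable [TopologicalSpace X]

lemma exists_isClosed_iUnion_eq_of_isGδ_compl {s : Set X} (hs : IsGδ sᶜ) :
    ∃ C : ℕ → Set X, (∀ n, IsClosed (C n)) ∧ s = ⋃ n, C n := by
  obtain ⟨U, hUo, hU⟩ := hs.eq_iInter_nat
  exact ⟨fun n => (U n)ᶜ, fun n => (hUo n).isClosed_compl,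
    by rw [← compl_compl s, hU, compl_iInter]⟩

lemma isGδ_compl_iUnion_diff [PerfectlyNormalSpace X] {F W : ℕ → Set X}
    (hF : ∀ n, IsClosed (F n)) (hW : ∀ n, IsClosed (W n)) : IsGδ (⋃ n, F n \ W n)ᶜ := by
  rw [compl_iUnion]
  refine .iInter fun n => ?_
  rw [sdiff_eq, compl_inter, compl_compl]
  exact (hF n).isOpen_compl.isGδ.union (hW n).isGδ

theorem exists_isGδ_isGδ_compl_separating [PerfectlyNormalSpace X] {H K : Set X}
    (hH : IsGδ H) (hK : IsGδ K) (hHK : Disjoint H K) :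
    ∃ S : Set X, IsGδ S ∧ IsGδ Sᶜ ∧ H ⊆ S ∧ Disjoint K S := by
  obtain ⟨U, hUo, rfl⟩ := hH.eq_iInter_nat
  obtain ⟨V, hVo, rfl⟩ := hK.eq_iInter_nat
  set F := fun n => (U n)ᶜ
  set G := fun n => (V n)ᶜ
  have hF (n : ℕ) : IsClosed (F n) := (hUo n).isClosed_compl
  have hG (n : ℕ) : IsClosed (G n) := (hVo n).isClosed_compl
  have hcover : (⋃ n, F n) ∪ ⋃ n, G n = univ := by
    rw [← compl_iInter, ← compl_iInter, ← compl_inter, hHK.inter_eq, compl_empty]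
  set A := ⋃ n, F n \ ⋃ m < n, G m
  refine ⟨Aᶜ, isGδ_compl_iUnion_diff hF
    fun n => (finite_lt_nat n).isClosed_biUnion fun m _ => hG m, ?_, ?_, ?_⟩
  · rw [compl_iUnion_diff_biUnion_lt hcover]
    exact isGδ_compl_iUnion_diff hG fun n => (finite_le_nat n).isClosed_biUnion fun m _ => hF m
  · rw [subset_compl_comm, compl_iInter]
    exact iUnion_mono fun n => sdiff_subset
  · rw [disjoint_compl_right_iff_subset]
    intro x hxK
    have hxH : x ∈ ⋃ n, F n := by
      rw [← compl_iInter]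
      exact fun hxH => hHK.ne_of_mem hxH hxK rfl
    obtain ⟨n, hxF⟩ := mem_iUnion.mp hxH
    refine mem_iUnion.mpr ⟨n, hxF, ?_⟩
    simp only [mem_iUnion, not_exists]
    exact fun m _ hxG => hxG (mem_iInter.mp hxK m)

end

/-- Hausdorff separation: disjoint Gδ subsets of Cantor space `2^ℕ` can be
separated by a set that is simultaneously Fσ and Gδ. -/
theorem gdelta_separation (H K : Set (ℕ → Bool)) (hH : IsGδ H) (hK : IsGδ K)
    (hdisj : Disjoint H K) :
    ∃ S : Set (ℕ → Bool),
      (∃ C : ℕ → Set (ℕ → Bool), (∀ n, IsClosed (C n)) ∧ S = ⋃ n, C n) ∧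
      IsGδ S ∧ H ⊆ S ∧ K ∩ S = ∅ := by
  obtain ⟨S, hS, hSc, hHS, hKS⟩ := exists_isGδ_isGδ_compl_separating hH hK hdisj
  exact ⟨S, exists_isClosed_iUnion_eq_of_isGδ_compl hSc, hS, hHS, hKS.inter_eq⟩
end

section
/- Let D ⊆ 2^ℕ be Dedekind finite, i.e., there is no injective function from ℕ into D. For x, y ∈ 2^ℕ let x + y denote pointwise addition mod 2, for sets A, B ⊆ 2^ℕ let A + B = {x + y : x ∈ A, y ∈ B}, and for n ∈ ℕ let E_n = {x ∈ 2^ℕ : x(k) = 0 for all k < n, and there exists l > n such that x(k) = 0 for all k > l}. Then D = ⋂_{n∈ℕ} (D + E_n). -/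
open Pointwise

/-- `E n` is the set of `x ∈ 2^ℕ` (viewed as `ℕ → ZMod 2`) vanishing below `n`
and vanishing beyond some `l > n`. -/
def Ezm (n : ℕ) : Set (ℕ → ZMod 2) :=
  {x | (∀ k < n, x k = 0) ∧ ∃ l > n, ∀ k > l, x k = 0}

/-- If `D ⊆ 2^ℕ` is Dedekind finite (no injection of `ℕ` into `D`), then
`D = ⋂ n, (D + E n)`, where `+` is pointwise addition mod 2. -/
theorem dedekind_finite_eq_iInter_add (D : Set (ℕ → ZMod 2))
    (hD : ¬ ∃ f : ℕ → (ℕ → ZMod 2), Function.Injective f ∧ ∀ n, f n ∈ D) :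
    D = ⋂ n, (D + Ezm n) := by
  ext d
  simp only [Set.mem_iInter]
  constructor
  · intro hd n
    refine Set.mem_add.2 ⟨d, hd, 0, ⟨fun k _ => rfl, n + 1, Nat.lt_succ_self n,
      fun k _ => rfl⟩, by simp⟩
  · intro h
    by_contra hdD
    have h' : ∀ n, ∃ a ∈ D, ∃ b ∈ Ezm n, a + b = d := fun n => Set.mem_add.1 (h n)
    choose x hx e he hxe using h'
    choose l hl hl2 using fun n => (he n).2
    have hne : ∀ n, ∃ k, e n k ≠ 0 := by
      intro n
      by_contra hc
      push_neg at hc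
      apply hdD
      have : e n = 0 := funext fun k => hc k
      rw [← hxe n, this, add_zero]
      exact hx n
    -- recursive sequence of indices with disjoint supports
    set m : ℕ → ℕ := fun k => Nat.rec 0 (fun _ ih => l ih + 1) k with hm
    have hmsucc : ∀ k, m (k + 1) = l (m k) + 1 := fun k => rfl
    have hmmono : StrictMono m := by
      apply strictMono_nat_of_lt_succ
      intro k
      rw [hmsucc]
      exact Nat.lt_succ_of_lt (hl (m k))
    have key : ∀ i j, i < j → e (m i) ≠ e (m j) := by
      intro i j hij hne'
      obtain ⟨k, hk⟩ := hne (m i)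
      have hkl : k ≤ l (m i) := by
        by_contra hc
        exact hk (hl2 (m i) k (Nat.lt_of_not_le hc))
      have hkm : k < m j := lt_of_lt_of_le (by rw [hmsucc]; omega)
        (hmmono.le_iff_le.2 hij)
      have : e (m j) k = 0 := (he (m j)).1 k hkm
      rw [hne'] at hk
      exact hk this
    apply hD
    refine ⟨fun k => x (m k), ?_, fun k => hx (m k)⟩
    intro i j hij
    by_contra hne'
    have hxne : x (m i) ≠ x (m j) := by
      intro hx'
      rcases Nat.lt_or_ge i j with hlt | hge
      · exact key i j hlt (by
          have h1 := hxe (m i); have h2 := hxe (m j)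
          rw [hx'] at h1
          have := h1.trans h2.symm
          exact add_left_cancel this)
      · have hlt : j < i := lt_of_le_of_ne hge (Ne.symm hne')
        exact key j i hlt (by
          have h1 := hxe (m i); have h2 := hxe (m j)
          rw [hx'] at h1
          have := h2.trans h1.symm
          exact add_left_cancel this)
    exact hxne hij
end

section
/- Let D ⊆ 2^ℕ and for n ∈ ℕ let E_n = {x ∈ 2^ℕ : x(k) = 0 for all k < n, and there exists l > n with x(k) = 0 for all k > l}, and let D + E_n = {d + e : d ∈ D, e ∈ E_n} with + pointwise addition mod 2. Let ℙ be the direct sum Σ_{n∈ℕ} ℙ(D + E_n): elements are sequences p = (p_n)_{n∈ℕ} with each p_n ∈ ℙ(D + E_n) and p_n equal to the trivial element (∅, ∅) for all but finitely many n, ordered coordinatewise. Then ℙ is σ-centered: ℙ is the union of a countable family of centered subsets, where a subset Σ is centered iff every finite subset of Σ has a common lower bound in ℙ. -/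
/-- The initial segment of `x : ℕ → Bool` of length `k`, as a finite binary string. -/
def initSeg (x : ℕ → Bool) (k : ℕ) : List Bool := List.ofFn (fun i : Fin k => x i)

/-- Pointwise addition mod 2 on `2^ℕ`. -/
def addMod2 (x y : ℕ → Bool) : ℕ → Bool := fun n => xor (x n) (y n)

/-- `E n` is the set of `x ∈ 2^ℕ` vanishing below `n` and beyond some `l > n`. -/
def Eset (n : ℕ) : Set (ℕ → Bool) :=
  {x | (∀ k < n, x k = false) ∧ ∃ l > n, ∀ k > l, x k = false}

/-- The sumset `D + E n`. -/
def sumSet (D : Set (ℕ → Bool)) (n : ℕ) : Set (ℕ → Bool) :=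
  {z | ∃ d ∈ D, ∃ e ∈ Eset n, z = addMod2 d e}

/-- Solovay's almost-disjoint sets forcing `ℙ(A)`: pairs `(Q, F)` with `Q` a
finite set of finite binary strings and `F` a finite subset of `A`. -/
def Pad (A : Set (ℕ → Bool)) : Type :=
  {p : Set (List Bool) × Set (ℕ → Bool) // p.1.Finite ∧ p.2.Finite ∧ p.2 ⊆ A}

/-- The trivial element `(∅, ∅)` of `ℙ(A)`. -/
def padOne (A : Set (ℕ → Bool)) : Pad A :=
  ⟨(∅, ∅), Set.finite_empty, Set.finite_empty, Set.empty_subset A⟩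

/-- The order on `ℙ(A)`: `p ≤ q` iff `Q_q ⊆ Q_p`, `F_q ⊆ F_p`, and no string in
`Q_p \ Q_q` is an initial segment of any member of `F_q`. -/
def padLe {A : Set (ℕ → Bool)} (p q : Pad A) : Prop :=
  q.1.1 ⊆ p.1.1 ∧ q.1.2 ⊆ p.1.2 ∧
    ∀ s ∈ p.1.1, s ∉ q.1.1 → ∀ x ∈ q.1.2, initSeg x s.length ≠ s

/-- The direct sum `Σ_{n} ℙ(D + E_n)`: sequences `(p_n)` with `p_n ∈ ℙ(D + E_n)`
and `p_n = (∅, ∅)` for all but finitely many `n`. -/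
def DirSum (D : Set (ℕ → Bool)) : Type :=
  {p : (n : ℕ) → Pad (sumSet D n) // {n | p n ≠ padOne (sumSet D n)}.Finite}

/-- The coordinatewise order on the direct sum. -/
def dirSumLe {D : Set (ℕ → Bool)} (p q : DirSum D) : Prop :=
  ∀ n, padLe (p.1 n) (q.1 n)

/-- The direct sum `Σ_{n} ℙ(D + E_n)` is σ-centered: it is a countable union of
centered subsets. -/
theorem dirSum_sigma_centered (D : Set (ℕ → Bool)) :
    ∃ Sig : ℕ → Set (DirSum D),
      (⋃ n, Sig n) = Set.univ ∧
      ∀ n, ∀ G : Set (DirSum D), G.Finite → G ⊆ Sig n →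
        ∃ p : DirSum D, ∀ q ∈ G, dirSumLe p q := by
 classical
  letI : Zero (Finset (List Bool)) := ⟨∅⟩
  obtain ⟨e, he⟩ := exists_surjective_nat (ℕ →₀ Finset (List Bool))
  refine ⟨fun n => {p | ∀ m, (p.1 m).1.1 = ↑(e n m)}, ?_, ?_⟩
  · ext p
    simp only [Set.mem_iUnion, Set.mem_univ, iff_true]
    have hfin : ∀ m, (p.1 m).1.1.Finite := fun m => (p.1 m).2.1
    have hsupp : (Function.support fun m => (hfin m).toFinset).Finite := by
      apply p.2.subset
      intro m hm
      simp only [Function.mem_support] at hm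
      intro hpm
      apply hm
      ext s
      simp [hpm, padOne, show (0 : Finset (List Bool)) = ∅ from rfl]
    obtain ⟨n, hn⟩ := he (Finsupp.ofSupportFinite _ hsupp)
    refine ⟨n, fun m => ?_⟩
    rw [hn]
    exact ((hfin m).coe_toFinset).symm
  · intro n G hG hGsub
    refine ⟨⟨fun m => ⟨(↑(e n m), ⋃ q ∈ G, (q.1 m).1.2),
        (e n m).finite_toSet, Set.Finite.biUnion hG (fun q _ => (q.1 m).2.2.1),
        Set.iUnion₂_subset (fun q _ => (q.1 m).2.2.2)⟩, ?_⟩, ?_⟩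
    · apply Set.Finite.subset
        (((e n).support.finite_toSet).union
          (hG.biUnion (fun q _ => q.2)))
      intro m hm
      by_contra hmem
      simp only [Set.mem_union, Finset.mem_coe, Finsupp.mem_support_iff, not_or,
        not_not, Set.mem_iUnion, not_exists, Set.mem_setOf_eq] at hmem
      apply hm
      apply Subtype.ext
      apply Prod.ext
      · show ((e n m : Finset (List Bool)) : Set (List Bool)) = ∅
        rw [hmem.1]; exact Finset.coe_empty
      · show (⋃ q ∈ G, (q.1 m).1.2) = ∅
        apply Set.eq_empty_iff_forall_notMem.2
        intro x hx
        simp only [Set.mem_iUnion] at hx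
        obtain ⟨q, hq, hxq⟩ := hx
        have := hmem.2 q hq
        rw [this] at hxq
        exact hxq
    · intro q hq m
      have hQ : (q.1 m).1.1 = ↑(e n m) := hGsub hq m
      refine ⟨by rw [hQ], ?_, ?_⟩
      · show (q.1 m).1.2 ⊆ ⋃ r ∈ G, (r.1 m).1.2
        exact Set.subset_biUnion_of_mem (u := fun r => (r.1 m).1.2) hq
      · intro s hs hns x hx
        exact absurd (hQ ▸ hs) hns
end
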